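/- There exists a constant C > 0 such that the following holds. Let n, k, B be positive integers with k even, 2 ≤ k ≤ n/2, let α be a real number with 1 ≤ α ≤ B, and let c be a real number with 1 ≤ c < 1 + 1/(4k). Then there exist a positive integer d ≤ C·k·log(2n/k) and a set P of n points in {0,1}ᵈ (with the Hamming distance) with the following property: for every positive integer t with t ≤ k/α, and every finite family 𝓑 of subsets of P, each of cardinality at most B, with t ≤ |𝓑|, such that for every q ∈ {0,1}ᵈ there exist a subfamily 𝓒 ⊆ 𝓑 with |𝓒| ≤ t and a set S ⊆ ⋃𝓒 with |S| = k and hammingDist(q,x) ≤ c·r for all x ∈ S, where r is the k-nearest-neighbor radius of q in P, one has |𝓑| ≥ ((1/(2e))·√(n·α/(k·B)))^α. -/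

import Mathlib

/-!
A hard instance: take `m + 1` words, `m = ⌊n/k⌋`, of a binary code of length `u = 8p`,
`2^p > 2n/k`, with minimum distance `p` (Gilbert–Varshamov), and put `k` clusters on disjoint
blocks of coordinates, a point of cluster `i` carrying a codeword followed by its complement on
block `i` and zeros elsewhere. For `f : Fin k → Fin m`, the query carrying codeword `f i` on
every block `i` is at distance exactly `r = (k - 1)u` from the `k` points `(i, f i)` and at
distance at least `r + 2p > c r` from every other point, so every answer must consist of these
`k` planted points. Read with at most `t ≤ k/α` blocks, one block holds `a = ⌈α⌉` of them, and
counting the functions `f` gives `m^a ≤ |𝓑| · C(B, a) ≤ |𝓑| (eB/a)^a`.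
-/

open Finset
open scoped Nat

/-- `r` is the `k`-nearest-neighbor radius of `q` in the finite set `P` of
points of Hamming space `{0,1}ᵈ`. -/
def IsHammingKNNRadius {d : ℕ} (P : Finset (Fin d → Bool)) (k : ℕ)
    (q : Fin d → Bool) (r : ℕ) : Prop :=
  ∃ T ⊆ P, T.card = k ∧
    (∀ x ∈ T, ∀ y ∈ P, y ∉ T → hammingDist q x ≤ hammingDist q y) ∧
    (∀ x ∈ T, hammingDist q x ≤ r) ∧ (∃ x ∈ T, hammingDist q x = r)

theorem choose_le_exp_mul_div_pow (B : ℕ) {a : ℕ} (ha : 0 < a) :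
    (B.choose a : ℝ) ≤ (Real.exp 1 * B / a) ^ a := by
  have hfac : (a : ℝ) ^ a / a ! ≤ Real.exp 1 ^ a := by
    rw [← Real.exp_nat_mul, mul_one]
    exact Real.pow_div_factorial_le_exp _ (Nat.cast_nonneg a) a
  have ha' : (a : ℝ) ≠ 0 := by positivity
  calc (B.choose a : ℝ) ≤ B ^ a / a ! := Nat.choose_le_pow_div a B
    _ = (B / a) ^ a * (a ^ a / a !) := by
        rw [div_pow, div_mul_div_comm, mul_comm ((a : ℝ) ^ a) (a ! : ℝ),
          mul_div_mul_right _ _ (pow_ne_zero a ha')]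
    _ ≤ (B / a) ^ a * Real.exp 1 ^ a := by gcongr
    _ = (Real.exp 1 * B / a) ^ a := by rw [← mul_pow, mul_div_assoc, mul_comm]

section Codes

theorem Nat.choose_le_choose_of_le_of_two_mul_le {u i p : ℕ} (hip : i ≤ p) (hpu : 2 * p ≤ u) :
    u.choose i ≤ u.choose p := by
  induction p, hip using Nat.le_induction with
  | base => rfl
  | succ j _ ih => exact (ih (by omega)).trans (Nat.choose_le_succ_of_lt_half_left (by omega))

theorem card_hammingDist_lt_le {κ : Type*} [Fintype κ] [DecidableEq κ] (c : κ → Bool) {p : ℕ}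
    (hp : 2 * p ≤ Fintype.card κ) :
    #{x | hammingDist c x < p} ≤ p * (Fintype.card κ).choose p := by
  calc #{x | hammingDist c x < p}
      ≤ #((range p).biUnion fun i => powersetCard i (univ : Finset κ)) := by
        refine card_le_card_of_injOn (fun x => ({i | c i ≠ x i} : Finset κ)) (fun x hx => ?_)
          fun x _ y _ hxy => funext fun i => ?_
        · simpa [hammingDist] using hx
        · have := congrArg (i ∈ ·) hxy
          simp only [mem_filter, mem_univ, true_and, eq_iff_iff] at this
          revert this
          cases c i <;> cases x i <;> cases y i <;> simp
    _ ≤ ∑ i ∈ range p, (Fintype.card κ).choose i := card_biUnion_le.trans (by simp)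
    _ ≤ ∑ _i ∈ range p, (Fintype.card κ).choose p := sum_le_sum fun i hi =>
        Nat.choose_le_choose_of_le_of_two_mul_le (mem_range.1 hi).le hp
    _ = p * (Fintype.card κ).choose p := by simp

theorem exists_code_of_mul_le_two_pow {u p M : ℕ} (hp : 0 < p) (hpu : 2 * p ≤ u)
    (hM : M * (p * u.choose p) ≤ 2 ^ u) :
    ∃ cw : Fin M → Fin u → Bool, ∀ j j', j ≠ j' → p ≤ hammingDist (cw j) (cw j') := by
  obtain ⟨𝒞, h𝒞⟩ := exists_maximal (s := {C : Finset (Fin u → Bool) |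
    ∀ x ∈ C, ∀ y ∈ C, x ≠ y → p ≤ hammingDist x y}) ⟨∅, by simp⟩
  have hsep := (mem_filter.1 h𝒞.prop).2
  have hcover : ∀ x, ∃ c ∈ 𝒞, hammingDist c x < p := by
    intro x
    by_contra! hfar
    have hx : x ∉ 𝒞 := fun hx => by simpa using (hfar x hx).trans_lt' hp
    refine hx (h𝒞.2 (mem_filter.2 ⟨mem_univ _, ?_⟩) (subset_insert x 𝒞) (mem_insert_self x 𝒞))
    simp only [mem_insert]
    rintro y (rfl | hy) z (rfl | hz) hyz
    · exact absurd rfl hyz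
    · exact hammingDist_comm z y ▸ hfar z hz
    · exact hfar y hy
    · exact hsep y hy z hz hyz
  have hcard : M ≤ #𝒞 := by
    have : 2 ^ u ≤ #𝒞 * (p * u.choose p) := calc
      2 ^ u = #(univ : Finset (Fin u → Bool)) := by simp
      _ ≤ #(𝒞.biUnion fun c => {x | hammingDist c x < p}) := card_le_card fun x _ => by
          obtain ⟨c, hc, hcx⟩ := hcover x
          exact mem_biUnion.2 ⟨c, hc, mem_filter.2 ⟨mem_univ _, hcx⟩⟩
      _ ≤ #𝒞 * (p * u.choose p) := card_biUnion_le_card_mul _ _ _ fun c _ => by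
          simpa using card_hammingDist_lt_le c (by simpa using hpu)
    exact Nat.le_of_mul_le_mul_right (hM.trans this)
      (Nat.mul_pos hp (Nat.choose_pos (by omega)))
  refine ⟨fun j => 𝒞.equivFin.symm (Fin.castLE hcard j), fun j j' hjj' => ?_⟩
  refine hsep _ (coe_mem _) _ (coe_mem _) fun h => hjj' ?_
  exact Fin.castLE_injective hcard (𝒞.equivFin.symm.injective (Subtype.ext h))

theorem exists_code_of_le_two_pow {M p : ℕ} (hp : 0 < p) (hM : M ≤ 2 ^ p) :
    ∃ cw : Fin M → Fin (8 * p) → Bool, ∀ j j', j ≠ j' → p ≤ hammingDist (cw j) (cw j') := by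
  refine exists_code_of_mul_le_two_pow hp (by omega) ?_
  have hchoose : ((8 * p).choose p : ℝ) ≤ 22 ^ p := by
    refine (choose_le_exp_mul_div_pow _ hp).trans (pow_le_pow_left₀ (by positivity) ?_ p)
    have hp' : (p : ℝ) ≠ 0 := by positivity
    rw [Nat.cast_mul, Nat.cast_ofNat, ← mul_assoc, mul_div_cancel_right₀ _ hp']
    linarith [Real.exp_one_lt_d9]
  have hpow : (p : ℝ) ≤ 2 ^ p := by exact_mod_cast Nat.lt_two_pow_self.le
  have : (M : ℝ) * (p * (8 * p).choose p) ≤ 2 ^ (8 * p) := calc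
    (M : ℝ) * (p * (8 * p).choose p) ≤ 2 ^ p * (2 ^ p * 22 ^ p) := by
        gcongr
        exact_mod_cast hM
    _ ≤ 256 ^ p := by
        rw [← mul_pow, ← mul_pow]
        exact pow_le_pow_left₀ (by norm_num) (by norm_num) p
    _ = 2 ^ (8 * p) := by rw [pow_mul]; norm_num
  exact_mod_cast this

end Codes

section HammingGeometry

variable {ι κ : Type*}

theorem hammingDist_comp_equiv {ι' β : Type*} [Fintype ι] [Fintype ι'] [DecidableEq β]
    (e : ι' ≃ ι) (x y : ι → β) : hammingDist (x ∘ e) (y ∘ e) = hammingDist x y := by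
  simp only [hammingDist, card_filter, Function.comp_apply]
  exact e.sum_comp fun i => if x i ≠ y i then 1 else 0

theorem hammingDist_prod_eq_sum [Fintype ι] [Fintype κ] {β : Type*} [DecidableEq β]
    (x y : ι × κ → β) :
    hammingDist x y = ∑ i, hammingDist (fun j => x (i, j)) (fun j => y (i, j)) := by
  simp only [hammingDist, card_filter]
  exact Fintype.sum_prod_type _

/-- Every `concatCompl c` has weight `card κ`, so the distance from a query to a point of
another cluster does not depend on the codewords. -/
def concatCompl (c : κ → Bool) : κ × Bool → Bool := fun z => xor (c z.1) z.2

theorem hammingDist_concatCompl [Fintype κ] (c c' : κ → Bool) :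
    hammingDist (concatCompl c) (concatCompl c') = 2 * hammingDist c c' := by
  rw [hammingDist_prod_eq_sum, hammingDist, card_filter, mul_sum]
  refine sum_congr rfl fun t _ => ?_
  simp only [concatCompl]
  cases c t <;> cases c' t <;> decide

theorem hammingDist_concatCompl_false [Fintype κ] (c : κ → Bool) :
    hammingDist (concatCompl c) (fun _ => false) = Fintype.card κ := by
  rw [hammingDist_prod_eq_sum, ← card_univ, card_eq_sum_ones]
  refine sum_congr rfl fun t _ => ?_
  simp only [concatCompl]
  cases c t <;> decide

def clusterPoint [DecidableEq ι] (i : ι) (c : κ → Bool) : ι × κ × Bool → Bool :=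
  fun z => if z.1 = i then concatCompl c z.2 else false

def clusterQuery (g : ι → κ → Bool) : ι × κ × Bool → Bool := fun z => concatCompl (g z.1) z.2

theorem hammingDist_clusterQuery_clusterPoint [Fintype ι] [DecidableEq ι] [Fintype κ]
    (g : ι → κ → Bool) (i : ι) (c : κ → Bool) :
    hammingDist (clusterQuery g) (clusterPoint i c) =
      (Fintype.card ι - 1) * Fintype.card κ + 2 * hammingDist (g i) c := by
  have hblock : ∀ i', hammingDist (fun z => clusterQuery g (i', z))
      (fun z => clusterPoint i c (i', z)) =
        if i' = i then 2 * hammingDist (g i) c else Fintype.card κ := by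
    intro i'
    by_cases h : i' = i
    · subst h
      simpa [clusterQuery, clusterPoint] using hammingDist_concatCompl (g i') c
    · simpa [clusterQuery, clusterPoint, h] using hammingDist_concatCompl_false (g i')
  rw [hammingDist_prod_eq_sum, sum_congr rfl fun i' _ => hblock i',
    ← add_sum_erase _ _ (mem_univ i), if_pos rfl,
    sum_congr rfl fun i' hi' => if_neg (ne_of_mem_erase hi'), sum_const,
    card_erase_of_mem (mem_univ i), card_univ, smul_eq_mul, add_comm]

theorem clusterPoint_injective [DecidableEq ι] [Nonempty κ] :
    Function.Injective fun x : ι × (κ → Bool) => clusterPoint x.1 x.2 := by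
  rintro ⟨i, c⟩ ⟨i', c'⟩ h
  obtain ⟨t⟩ := ‹Nonempty κ›
  obtain rfl : i = i' := by
    by_contra hne
    have h₀ := congrFun h (i, t, false)
    have h₁ := congrFun h (i, t, true)
    simp [clusterPoint, concatCompl, hne] at h₀ h₁
    simp [h₀] at h₁
  refine Prod.ext rfl (funext fun s => ?_)
  simpa [clusterPoint, concatCompl] using congrFun h (i, s, false)

theorem exists_hammingEmbedding {k u : ℕ} (hu : 0 < u) {β : Type*} {cw : β → Fin u → Bool}
    (hcw : Function.Injective cw) :
    ∃ point : Fin k × β → Fin (k * (u * 2)) → Bool, Function.Injective point ∧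
      ∃ query : (Fin k → β) → Fin (k * (u * 2)) → Bool, ∀ g i j,
        hammingDist (query g) (point (i, j)) =
          (k - 1) * u + 2 * hammingDist (cw (g i)) (cw j) := by
  have : Nonempty (Fin u) := ⟨⟨0, hu⟩⟩
  let e : Fin (k * (u * 2)) ≃ Fin k × Fin u × Bool := (Fintype.equivFinOfCardEq (by simp)).symm
  refine ⟨fun x => clusterPoint x.1 (cw x.2) ∘ e, fun x y h => ?_,
    fun g => clusterQuery (cw ∘ g) ∘ e, fun g i j => ?_⟩
  · have := clusterPoint_injective (a₁ := (x.1, cw x.2)) (a₂ := (y.1, cw y.2))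
      (e.surjective.injective_comp_right h)
    exact Prod.ext (Prod.ext_iff.1 this).1 (hcw (Prod.ext_iff.1 this).2)
  · rw [hammingDist_comp_equiv, hammingDist_clusterQuery_clusterPoint]
    simp

end HammingGeometry

def IsPlantedKNNInstance {d : ℕ} {ι β : Type*} (P : Finset (Fin d → Bool)) (k : ℕ) (c : ℝ)
    (pt : ι × β → Fin d → Bool) : Prop :=
  Function.Injective pt ∧ ∀ f : ι → β, ∃ q r, IsHammingKNNRadius P k q r ∧
    ∀ x ∈ P, (hammingDist q x : ℝ) ≤ c * r → ∃ i, x = pt (i, f i)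

theorem mul_lt_add_of_lt_one_add_inv {k p c : ℝ} (hk : 1 ≤ k) (hp : 0 < p)
    (hc : c < 1 + 1 / (4 * k)) : c * ((k - 1) * (8 * p)) < (k - 1) * (8 * p) + 2 * p := by
  have hr : 0 ≤ (k - 1) * (8 * p) := by nlinarith
  have hk₀ : k ≠ 0 := by positivity
  calc c * ((k - 1) * (8 * p)) ≤ (1 + 1 / (4 * k)) * ((k - 1) * (8 * p)) := by gcongr
    _ = (k - 1) * (8 * p) + 2 * p - 2 * p / k := by field_simp; ring
    _ < (k - 1) * (8 * p) + 2 * p := by linarith [show 0 < 2 * p / k by positivity]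

theorem isHammingKNNRadius_of_forall_eq {d k r : ℕ} {P T : Finset (Fin d → Bool)}
    {q : Fin d → Bool} (hTP : T ⊆ P) (hTk : #T = k) (hk : 0 < k)
    (hT : ∀ x ∈ T, hammingDist q x = r) (hP : ∀ y ∈ P, r ≤ hammingDist q y) :
    IsHammingKNNRadius P k q r := by
  obtain ⟨x₀, hx₀⟩ := card_pos.1 (hTk ▸ hk)
  exact ⟨T, hTP, hTk, fun x hx y hy _ => (hT x hx).trans_le (hP y hy), fun x hx => (hT x hx).le,
    x₀, hx₀, hT x₀ hx₀⟩

theorem exists_isPlantedKNNInstance {k m n p : ℕ} (hk : 0 < k) (hkm : k * m ≤ n)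
    (hnk : n ≤ k * (m + 1)) {c : ℝ} (hc : c < 1 + 1 / (4 * k)) (hp : 0 < p)
    {cw : Fin (m + 1) → Fin (8 * p) → Bool}
    (hcw : ∀ j j', j ≠ j' → p ≤ hammingDist (cw j) (cw j')) :
    ∃ P : Finset (Fin (k * (8 * p * 2)) → Bool), #P = n ∧
      ∃ pt : Fin k × Fin m → Fin (k * (8 * p * 2)) → Bool, IsPlantedKNNInstance P k c pt := by
  have hcw_inj : Function.Injective cw := fun j j' h => by
    by_contra hne
    simpa [h] using (hcw j j' hne).trans_lt' hp
  obtain ⟨point, hpoint, query, hdist⟩ :=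
    exists_hammingEmbedding (k := k) (by omega : 0 < 8 * p) hcw_inj
  set pt : Fin k × Fin m → _ := fun x => point (x.1, x.2.castSucc)
  have hpt : Function.Injective pt := fun x y h => by
    simpa [Prod.ext_iff] using hpoint h
  -- `P`: the `k m` grid points met by the queries, padded with points of the spare codeword `m`.
  obtain ⟨P, hgrid, hPpoint, hPn⟩ := exists_subsuperset_card_eq (s := univ.image pt)
    (t := univ.image point) (image_subset_iff.2 fun x _ => mem_image_of_mem _ (mem_univ _))
    (by simpa [card_image_of_injective _ hpt]) (by simpa [card_image_of_injective _ hpoint])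
  refine ⟨P, hPn, pt, hpt, fun f => ⟨query fun i => (f i).castSucc, (k - 1) * (8 * p), ?_, ?_⟩⟩
  · refine isHammingKNNRadius_of_forall_eq (T := univ.image fun i => pt (i, f i)) ?_ ?_ hk ?_ ?_
    · exact (image_subset_iff.2 fun i _ => mem_image_of_mem _ (mem_univ _)).trans hgrid
    · rw [card_image_of_injective _ fun i j h => congrArg Prod.fst (hpt h)]
      simp
    · simp [pt, hdist]
    · intro y hy
      obtain ⟨x, -, rfl⟩ := mem_image.1 (hPpoint hy)
      rw [hdist]
      omega
  · intro y hy hyc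
    obtain ⟨⟨i, j⟩, -, rfl⟩ := mem_image.1 (hPpoint hy)
    by_cases hj : j = (f i).castSucc
    · exact ⟨i, by rw [hj]⟩
    refine absurd hyc (not_le.2 ?_)
    have hfar : (k - 1) * (8 * p) + 2 * p ≤
        hammingDist (query fun i => (f i).castSucc) (point (i, j)) := by
      rw [hdist]
      have := hcw _ _ (Ne.symm hj)
      omega
    calc c * ((k - 1) * (8 * p) : ℕ) < ((k - 1) * (8 * p) + 2 * p : ℕ) := by
          push_cast [Nat.cast_sub (Nat.succ_le_of_lt hk)]
          exact mul_lt_add_of_lt_one_add_inv (by exact_mod_cast hk) (by exact_mod_cast hp) hc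
      _ ≤ _ := by exact_mod_cast hfar

section Counting

variable {ι β : Type*} [Fintype ι] [DecidableEq ι] [Fintype β] [DecidableEq β]

theorem card_filter_forall_mem_apply_eq_le (X : Finset (ι × β)) :
    #{f : ι → β | ∀ x ∈ X, f x.1 = x.2} ≤ Fintype.card β ^ (Fintype.card ι - #X) := by
  rcases Finset.eq_empty_or_nonempty {f : ι → β | ∀ x ∈ X, f x.1 = x.2} with h | ⟨f₀, hf₀⟩
  · rw [h, card_empty]
    exact Nat.zero_le _
  simp only [mem_filter, mem_univ, true_and] at hf₀
  set S := X.image Prod.fst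
  have hS : #S = #X := card_image_of_injOn fun x hx y hy hxy => by
    rw [Prod.ext_iff, ← hf₀ x hx, ← hf₀ y hy]
    exact ⟨hxy, congrArg f₀ hxy⟩
  calc #{f : ι → β | ∀ x ∈ X, f x.1 = x.2}
      ≤ #(univ : Finset (↥(Sᶜ) → β)) := by
        refine card_le_card_of_injOn (fun f i => f i) (fun _ _ => mem_coe.2 (mem_univ _)) ?_
        intro f hf g hg hfg
        simp only [coe_filter, mem_univ, true_and, Set.mem_ofPred_eq] at hf hg
        funext i
        by_cases hi : i ∈ S
        · obtain ⟨x, hx, rfl⟩ := mem_image.1 hi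
          rw [hf x hx, hg x hx]
        · exact congrFun hfg ⟨i, mem_compl.2 hi⟩
    _ = Fintype.card β ^ (Fintype.card ι - #X) := by
        rw [card_univ, Fintype.card_fun, Fintype.card_coe, card_compl, hS]

theorem card_pow_le_card_mul_choose {a B : ℕ} (ha : 0 < a) (𝓑 : Finset (Finset (ι × β)))
    (h𝓑 : ∀ b ∈ 𝓑, #b ≤ B) (hcover : ∀ f : ι → β, ∃ b ∈ 𝓑, a ≤ #{i | (i, f i) ∈ b}) :
    Fintype.card β ^ a ≤ #𝓑 * B.choose a := by
  rcases (Fintype.card β).eq_zero_or_pos with hβ | hβ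
  · simp [hβ, ha.ne']
  obtain ⟨f₀⟩ : Nonempty (ι → β) := by
    have := Fintype.card_pos_iff.1 hβ
    infer_instance
  have haι : a ≤ Fintype.card ι := by
    obtain ⟨b, -, hb⟩ := hcover f₀
    exact hb.trans (card_filter_le _ _)
  set agree : Finset (ι × β) → Finset (ι → β) := fun X => {f | ∀ x ∈ X, f x.1 = x.2}
  have hcov : (univ : Finset (ι → β)) ⊆ 𝓑.biUnion fun b => (b.powersetCard a).biUnion agree := by
    intro f _
    obtain ⟨b, hb, hfb⟩ := hcover f
    obtain ⟨T, hT, hTa⟩ := exists_subset_card_eq hfb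
    refine mem_biUnion.2 ⟨b, hb, mem_biUnion.2 ⟨T.image fun i => (i, f i), ?_, ?_⟩⟩
    · refine mem_powersetCard.2 ⟨fun x hx => ?_, ?_⟩
      · obtain ⟨i, hi, rfl⟩ := mem_image.1 hx
        exact (mem_filter.1 (hT hi)).2
      · rw [card_image_of_injective _ fun i j h => congrArg Prod.fst h, hTa]
    · simp [agree]
  have hsum : Fintype.card β ^ Fintype.card ι ≤
      #𝓑 * (B.choose a * Fintype.card β ^ (Fintype.card ι - a)) := by
    rw [← Fintype.card_fun, ← card_univ]
    refine (card_le_card hcov).trans (card_biUnion_le_card_mul _ _ _ fun b hb => ?_)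
    refine (card_biUnion_le_card_mul _ _ (Fintype.card β ^ (Fintype.card ι - a))
      fun X hX => ?_).trans ?_
    · rw [← (mem_powersetCard.1 hX).2]
      exact card_filter_forall_mem_apply_eq_le X
    · rw [card_powersetCard]
      exact Nat.mul_le_mul_right _ (Nat.choose_le_choose a (h𝓑 b hb))
  rw [← Nat.pow_sub_mul_pow _ haι, mul_comm, ← mul_assoc, mul_comm (#𝓑)] at hsum
  exact Nat.le_of_mul_le_mul_right (by linarith) (Nat.pow_pos hβ)

theorem card_pow_le_card_mul_choose_of_injective {α : Type*} [DecidableEq α] {a B : ℕ}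
    (ha : 0 < a) {pt : ι × β → α} (hpt : Function.Injective pt) (𝓑 : Finset (Finset α))
    (h𝓑 : ∀ b ∈ 𝓑, #b ≤ B) (hcover : ∀ f : ι → β, ∃ b ∈ 𝓑, a ≤ #{i | pt (i, f i) ∈ b}) :
    Fintype.card β ^ a ≤ #𝓑 * B.choose a := by
  set pull : Finset α → Finset (ι × β) := fun b => {x | pt x ∈ b}
  calc Fintype.card β ^ a ≤ #(𝓑.image pull) * B.choose a := by
        refine card_pow_le_card_mul_choose ha _ ?_ fun f => ?_
        · simp only [mem_image, forall_exists_index, and_imp, forall_apply_eq_imp_iff₂]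
          intro b hb
          refine (card_le_card_of_injOn pt (fun x hx => ?_) hpt.injOn).trans (h𝓑 b hb)
          simpa [pull] using hx
        · obtain ⟨b, hb, hab⟩ := hcover f
          exact ⟨pull b, mem_image_of_mem _ hb, by simpa [pull] using hab⟩
    _ ≤ #𝓑 * B.choose a := Nat.mul_le_mul_right _ card_image_le

theorem exists_le_card_inter_of_subset_sup {α : Type*} [DecidableEq α] {𝓒 : Finset (Finset α)}
    {S : Finset α} {a : ℕ} (hS : S ⊆ 𝓒.sup id) (h : #𝓒 * (a - 1) < #S) :
    ∃ b ∈ 𝓒, a ≤ #(S ∩ b) := by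
  by_contra! hlt
  have : #S ≤ #𝓒 * (a - 1) := calc
    #S ≤ #(𝓒.biUnion (S ∩ ·)) := card_le_card fun x hx => by
          obtain ⟨b, hb, hxb⟩ := mem_sup.1 (hS hx)
          exact mem_biUnion.2 ⟨b, hb, mem_inter.2 ⟨hx, hxb⟩⟩
    _ ≤ #𝓒 * (a - 1) :=
          card_biUnion_le_card_mul _ _ _ fun b hb => Nat.le_sub_one_of_lt (hlt b hb)
  omega

end Counting

theorem IsPlantedKNNInstance.pow_le_card_mul_choose {ι β : Type*} [Fintype ι] [DecidableEq ι]
    [Fintype β] [DecidableEq β] {d k t a B : ℕ} {c : ℝ} {P : Finset (Fin d → Bool)}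
    {pt : ι × β → Fin d → Bool} (hP : IsPlantedKNNInstance P k c pt) (ha : 0 < a)
    (hta : t * (a - 1) < k) {𝓑 : Finset (Finset (Fin d → Bool))}
    (h𝓑 : ∀ b ∈ 𝓑, b ⊆ P ∧ #b ≤ B)
    (hquery : ∀ q r, IsHammingKNNRadius P k q r → ∃ 𝓒 ⊆ 𝓑, #𝓒 ≤ t ∧
      ∃ S ⊆ 𝓒.sup id, #S = k ∧ ∀ x ∈ S, (hammingDist q x : ℝ) ≤ c * r) :
    Fintype.card β ^ a ≤ #𝓑 * B.choose a := by
  refine card_pow_le_card_mul_choose_of_injective ha hP.1 𝓑 (fun b hb => (h𝓑 b hb).2)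
    fun f => ?_
  obtain ⟨q, r, hr, hplanted⟩ := hP.2 f
  obtain ⟨𝓒, h𝓒, h𝓒t, S, hS, hSk, hSc⟩ := hquery q r hr
  obtain ⟨b, hb, hab⟩ := exists_le_card_inter_of_subset_sup hS
    (hSk ▸ (Nat.mul_le_mul_right _ h𝓒t).trans_lt hta)
  refine ⟨b, h𝓒 hb, ?_⟩
  calc a ≤ #(S ∩ b) := hab
    _ ≤ #((univ.filter fun i => pt (i, f i) ∈ b).image fun i => pt (i, f i)) :=
      card_le_card fun x hx => by
        obtain ⟨hxS, hxb⟩ := mem_inter.1 hx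
        obtain ⟨i, rfl⟩ := hplanted x ((h𝓑 b (h𝓒 hb)).1 hxb) (hSc x hxS)
        exact mem_image_of_mem _ (mem_filter.2 ⟨mem_univ _, hxb⟩)
    _ ≤ #{i | pt (i, f i) ∈ b} := card_image_le

theorem mul_ceil_sub_one_lt {t k : ℕ} {α : ℝ} (ht : 0 < t) (hα : 0 < α) (htk : (t : ℝ) ≤ k / α) :
    t * (⌈α⌉₊ - 1) < k := by
  have hceil : ((⌈α⌉₊ - 1 : ℕ) : ℝ) < α := by
    rw [Nat.cast_sub (Nat.one_le_iff_ne_zero.2 (Nat.ceil_pos.2 hα).ne'), Nat.cast_one]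
    linarith [Nat.ceil_lt_add_one hα.le]
  have : ((t * (⌈α⌉₊ - 1) : ℕ) : ℝ) < k := calc
    ((t * (⌈α⌉₊ - 1) : ℕ) : ℝ) = t * ((⌈α⌉₊ - 1 : ℕ) : ℝ) := Nat.cast_mul _ _
    _ < t * α := by gcongr
    _ ≤ k := (le_div_iff₀ hα).1 htk
  exact_mod_cast this

theorem natLog_add_one_le_three_mul_log {N : ℕ} {x : ℝ} (hN : N ≠ 0) (hNx : N ≤ x) (hx : 4 ≤ x) :
    (Nat.log 2 N + 1 : ℝ) ≤ 3 * Real.log x := by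
  have hlog₂ := Real.log_two_gt_d9
  have hlogN : (Nat.log 2 N : ℝ) * Real.log 2 ≤ Real.log x := by
    rw [← Real.log_pow]
    refine Real.log_le_log (by positivity) (le_trans ?_ hNx)
    exact_mod_cast Nat.pow_log_le_self 2 hN
  have hlog₄ : 2 * Real.log 2 ≤ Real.log x := by
    have h4 : Real.log 4 = 2 * Real.log 2 := by
      rw [show (4 : ℝ) = 2 ^ 2 by norm_num, Real.log_pow, Nat.cast_ofNat]
    exact h4 ▸ Real.log_le_log (by norm_num) hx
  nlinarith [Nat.cast_nonneg (α := ℝ) (Nat.log 2 N)]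

theorem pow_mul_div_le_of_pow_le_mul_choose {m a B N : ℕ} (ha : 0 < a)
    (h : m ^ a ≤ N * B.choose a) : ((m * a / (Real.exp 1 * B) : ℝ)) ^ a ≤ N := by
  rcases B.eq_zero_or_pos with rfl | hB
  · simp [ha.ne']
  have hpos : (0 : ℝ) < (Real.exp 1 * B / a) ^ a := by positivity
  calc ((m * a / (Real.exp 1 * B) : ℝ)) ^ a = m ^ a / (Real.exp 1 * B / a) ^ a := by
        rw [← div_pow, div_div_eq_mul_div, mul_div_assoc]
    _ ≤ N := by
        rw [div_le_iff₀ hpos]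
        calc (m : ℝ) ^ a ≤ N * B.choose a := by exact_mod_cast h
          _ ≤ N * (Real.exp 1 * B / a) ^ a := by gcongr; exact choose_le_exp_mul_div_pow B ha

theorem rpow_le_of_pow_le_mul_choose {n k m a B N : ℕ} {α : ℝ} (hk : 0 < k) (hB : 0 < B)
    (hα : 1 ≤ α) (hαa : α ≤ a) (hn : n ≤ 2 * k * m) (hN : 1 ≤ N) (h : m ^ a ≤ N * B.choose a) :
    ((1 / (2 * Real.exp 1)) * √(n * α / (k * B))) ^ α ≤ N := by
  set x : ℝ := n * α / (k * B) with hx_def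
  have ha : 0 < a := by exact_mod_cast hα.trans_lt' zero_lt_one |>.trans_le hαa
  rcases le_or_gt (1 / (2 * Real.exp 1) * √x) 1 with hb | hb
  · calc (1 / (2 * Real.exp 1) * √x) ^ α ≤ 1 := Real.rpow_le_one (by positivity) hb (by linarith)
      _ ≤ N := by exact_mod_cast hN
  have he : 1 ≤ 2 * Real.exp 1 := by linarith [Real.add_one_le_exp 1]
  have hx : √x ≤ x := by
    refine Real.sqrt_le_self_iff.2 (Or.inr ?_)
    by_contra! hx1
    have : 1 / (2 * Real.exp 1) * √x ≤ 1 :=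
      mul_le_one₀ ((div_le_one (by positivity)).2 he) (Real.sqrt_nonneg x)
        (Real.sqrt_le_one.2 hx1.le)
    linarith
  have hbm : 1 / (2 * Real.exp 1) * √x ≤ m * a / (Real.exp 1 * B) := calc
    1 / (2 * Real.exp 1) * √x ≤ 1 / (2 * Real.exp 1) * x := by gcongr
    _ = n * α / (2 * k * (Real.exp 1 * B)) := by rw [hx_def]; field_simp
    _ ≤ (2 * k * m) * a / (2 * k * (Real.exp 1 * B)) := by gcongr; exact_mod_cast hn
    _ = m * a / (Real.exp 1 * B) := by field_simp
  calc (1 / (2 * Real.exp 1) * √x) ^ α ≤ (1 / (2 * Real.exp 1) * √x) ^ (a : ℝ) :=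
        Real.rpow_le_rpow_of_exponent_le hb.le hαa
    _ = (1 / (2 * Real.exp 1) * √x) ^ a := Real.rpow_natCast _ a
    _ ≤ (m * a / (Real.exp 1 * B)) ^ a := pow_le_pow_left₀ (by positivity) hbm a
    _ ≤ N := pow_mul_div_le_of_pow_le_mul_choose ha h

/-- Theorem 3, lower bound for `(c,k)`-NN in Hamming space:
any indexing scheme with query time `t ≤ k/α` I/Os for `c`-approximate
`k`-nearest-neighbor queries, `c < 1 + 1/(4k)`, on a suitable `n`-point set
in dimension `d = O(k log(n/k))` must use `((1/(2e))·√(nα/(kB)))^α` blocks. -/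
theorem hamming_knn_indexing_lower_bound :
    ∃ C : ℝ, 0 < C ∧
      ∀ n k B : ℕ, 0 < n → 0 < k → 0 < B → Even k → 2 ≤ k → 2 * k ≤ n →
      ∀ α : ℝ, 1 ≤ α → α ≤ (B : ℝ) →
      ∀ c : ℝ, 1 ≤ c → c < 1 + 1 / (4 * (k : ℝ)) →
      ∃ d : ℕ, 0 < d ∧ (d : ℝ) ≤ C * k * Real.log (2 * (n : ℝ) / k) ∧
      ∃ P : Finset (Fin d → Bool), P.card = n ∧
        ∀ t : ℕ, 0 < t → (t : ℝ) ≤ (k : ℝ) / α →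
        ∀ 𝓑 : Finset (Finset (Fin d → Bool)),
          (∀ b ∈ 𝓑, b ⊆ P ∧ b.card ≤ B) → t ≤ 𝓑.card →
          (∀ q : Fin d → Bool, ∀ r : ℕ, IsHammingKNNRadius P k q r →
            ∃ 𝓒 ⊆ 𝓑, 𝓒.card ≤ t ∧
              ∃ S ⊆ 𝓒.sup id, S.card = k ∧
                ∀ x ∈ S, (hammingDist q x : ℝ) ≤ c * (r : ℝ)) →
          (𝓑.card : ℝ) ≥
            ((1 / (2 * Real.exp 1)) *
              Real.sqrt ((n : ℝ) * α / ((k : ℝ) * (B : ℝ)))) ^ α := by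
  refine ⟨48, by norm_num, fun n k B _ hk hB _ _ hkn α hα _ c _ hc => ?_⟩
  obtain ⟨m, hm_def⟩ : ∃ m, n / k = m := ⟨_, rfl⟩
  have hm : 1 ≤ m := hm_def ▸ (Nat.le_div_iff_mul_le hk).2 (by omega)
  have hkm : k * m ≤ n := hm_def ▸ Nat.mul_div_le n k
  have hnk : n < k * (m + 1) := hm_def ▸ Nat.lt_mul_div_succ n hk
  have hmN : m + 1 ≤ 2 * n / k := hm_def ▸
    (show n / k + 1 ≤ 2 * (n / k) by omega).trans (Nat.mul_div_le_mul_div_assoc 2 n k)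
  set p := Nat.log 2 (2 * n / k) + 1
  obtain ⟨cw, hcw⟩ := exists_code_of_le_two_pow (M := m + 1) (Nat.succ_pos _)
    (hmN.trans (Nat.lt_pow_succ_log_self one_lt_two _).le)
  obtain ⟨P, hPn, pt, hP⟩ :=
    exists_isPlantedKNNInstance hk hkm hnk.le hc (Nat.succ_pos _) hcw
  refine ⟨_, by positivity, ?_, P, hPn, fun t ht htk 𝓑 h𝓑 ht𝓑 hquery => ?_⟩
  · have hx : (4 : ℝ) ≤ 2 * n / k := by
      rw [le_div_iff₀ (by positivity)]
      exact_mod_cast (by omega : 4 * k ≤ 2 * n)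
    have hp := natLog_add_one_le_three_mul_log (N := 2 * n / k) (by omega)
      (by exact_mod_cast Nat.cast_div_le (α := ℝ)) hx
    push_cast [p] at hp ⊢
    nlinarith [(Nat.cast_pos (α := ℝ)).2 hk]
  · have hcount := hP.pow_le_card_mul_choose (Nat.ceil_pos.2 (by linarith))
      (mul_ceil_sub_one_lt ht (by linarith) htk) h𝓑 hquery
    rw [Fintype.card_fin] at hcount
    exact rpow_le_of_pow_le_mul_choose hk hB hα (Nat.le_ceil α)
      (by nlinarith [Nat.mul_le_mul_left k hm]) (ht.trans_le ht𝓑) hcount
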